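/- arXiv:2008.10192 — 3 statements merged into one kernel-verified Lean document; each statement's English description precedes it below -/
import Mathlib

section
/- Suppose an oriented closed polygon P in the plane is split at a self-crossing point into two oriented closed polygons P' and P'' (each inheriting the orientation of P). Then tn(P) = tn(P') + tn(P''). -/
open Real Complex

/-- The turning angle of the closed polygon `v` at vertex `i`. -/
noncomputable def polyTurn {n : ℕ} [NeZero n] (v : Fin n → ℂ) (i : Fin n) : ℝ :=
  Complex.arg ((v (i + 1) - v i) / (v i - v (i - 1)))

/-- The turning number of a closed polygon: the sum of its turning angles divided
by `2π`. -/
noncomputable def turningNumber {n : ℕ} [NeZero n] (v : Fin n → ℂ) : ℝ :=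
  (∑ i : Fin n, polyTurn v i) / (2 * π)

/-!
A turning angle only depends on the directions of the two edges at its vertex. Each of the
two loops obtained by splitting at `c` leaves `c` along one crossing edge and returns along
the other, in the directions these edges have in `v`; so its turning angles away from `c`
are the turning angles of `v` along the corresponding arc. If `d₁, d₂` are the directions
of the crossing edges, the angles of the loops at `c` are `arg (d₁ / d₂)` and
`arg (d₂ / d₁)`, which cancel because the crossing is transversal.
-/

namespace Complex

theorem arg_mul_div_mul_of_pos {r r' : ℝ} (hr : 0 < r) (hr' : 0 < r') (x y : ℂ) :
    arg (r * x / (r' * y)) = arg (x / y) := by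
  rw [mul_div_mul_comm, ← ofReal_div, arg_real_mul _ (div_pos hr hr')]

theorem arg_div_add_arg_div_eq_zero {x y : ℂ} (h : ∀ r : ℝ, x ≠ r * y) :
    arg (x / y) + arg (y / x) = 0 := by
  -- `arg z⁻¹ = -arg z` off the negative real axis, and `h` keeps `x / y` off the real axis.
  have hpi : arg (x / y) ≠ π := by
    intro hπ
    have hy : y ≠ 0 := by
      rintro rfl
      rw [div_zero, arg_zero] at hπ
      exact Real.pi_ne_zero hπ.symm
    have hreal : x / y = ((x / y).re : ℂ) := ext rfl (by simp [(arg_eq_pi_iff.mp hπ).2])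
    exact h (x / y).re (by rw [← hreal, div_mul_cancel₀ _ hy])
  rw [← inv_div x y, arg_inv, if_neg hpi, add_neg_cancel]

end Complex

theorem exists_pos_smul_sub_of_mem_openSegment {E : Type*} [AddCommGroup E] [Module ℝ E]
    {a b x : E} (hx : x ∈ openSegment ℝ a b) :
    (∃ r : ℝ, 0 < r ∧ b - x = r • (b - a)) ∧
      ∃ r : ℝ, 0 < r ∧ x - a = r • (b - a) := by
  obtain ⟨α, β, hα, hβ, hαβ, rfl⟩ := hx
  refine ⟨⟨α, hα, ?_⟩, β, hβ, ?_⟩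
  · linear_combination (norm := module) (-hαβ) • b
  · linear_combination (norm := module) hαβ • a

open Finset Fin.NatCast

theorem Fin.cons_natCast_of_pos {α : Type*} {K j : ℕ} (x : α) (w : Fin K → α)
    (hj₀ : 0 < j) (hjK : j ≤ K) :
    (Fin.cons x w : Fin (K + 1) → α) (j : Fin (K + 1)) = w ⟨j - 1, by omega⟩ := by
  obtain ⟨i, rfl⟩ : ∃ i, j = i + 1 := ⟨j - 1, by omega⟩
  have hcast : ((i + 1 : ℕ) : Fin (K + 1)) = Fin.succ ⟨i, by omega⟩ :=
    Fin.ext (Fin.val_cast_of_lt (by omega))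
  rw [hcast, Fin.cons_succ]
  rfl

noncomputable def pathTurn (V : ℕ → ℂ) (k : ℕ) : ℝ :=
  arg ((V (k + 2) - V (k + 1)) / (V (k + 1) - V k))

open Fin.CommRing in
theorem sum_polyTurn_eq_sum_pathTurn {N : ℕ} [NeZero N] (p : Fin N → ℂ) (s : ℕ) :
    ∑ i, polyTurn p i = ∑ k ∈ range N, pathTurn (fun j => p (j : Fin N)) (s + k) := by
  rw [← Equiv.sum_comp (Equiv.addRight ((s + 1 : ℕ) : Fin N)), ← Fin.sum_univ_eq_sum_range]
  refine sum_congr rfl fun i _ => ?_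
  simp only [polyTurn, pathTurn, Equiv.coe_addRight]
  congr 4 <;> push_cast <;> ring

theorem sum_polyTurn_eq_of_edge_eq_pos_mul {K : ℕ} (q : Fin (K + 1) → ℂ) (V : ℕ → ℂ)
    (s : ℕ) (hq : ∀ j ≤ K, ∃ r : ℝ, 0 < r ∧
      q ((j + 1 : ℕ) : Fin (K + 1)) - q (j : Fin (K + 1)) = r * (V (s + j + 1) - V (s + j))) :
    ∑ i, polyTurn q i = ∑ k ∈ range K, pathTurn V (s + k) +
      arg ((V (s + 1) - V s) / (V (s + K + 1) - V (s + K))) := by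
  rw [sum_polyTurn_eq_sum_pathTurn q 0, sum_range_succ]
  congr 1
  · refine sum_congr rfl fun k hk => ?_
    have hk := mem_range.mp hk
    obtain ⟨r, hr, hnext⟩ := hq (k + 1) hk
    obtain ⟨r', hr', hprev⟩ := hq k hk.le
    simp only [pathTurn, zero_add]
    rw [hnext, hprev, arg_mul_div_mul_of_pos hr hr']
    rfl
  · obtain ⟨r, hr, hfirst⟩ := hq 0 (Nat.zero_le K)
    obtain ⟨r', hr', hlast⟩ := hq K le_rfl
    have h1 : ((K + 2 : ℕ) : Fin (K + 1)) = ((0 + 1 : ℕ) : Fin (K + 1)) := Fin.ext <| by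
      simp only [Fin.val_natCast]
      rw [show K + 2 = 0 + 1 + (K + 1) by omega, Nat.add_mod_right]
    have h0 : ((K + 1 : ℕ) : Fin (K + 1)) = ((0 : ℕ) : Fin (K + 1)) := by simp
    rw [h0] at hlast
    simp only [pathTurn, zero_add]
    rw [h1, h0, hfirst, hlast, arg_mul_div_mul_of_pos hr hr', add_zero]

theorem sum_polyTurn_cons_of_mem_openSegment {K : ℕ} (hK : 1 ≤ K) (V : ℕ → ℂ) (s : ℕ)
    (x : ℂ) (w : Fin K → ℂ) (hw : ∀ i : Fin K, w i = V (s + 1 + i))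
    (hx₀ : x ∈ openSegment ℝ (V s) (V (s + 1)))
    (hx₁ : x ∈ openSegment ℝ (V (s + K)) (V (s + K + 1))) :
    ∑ i, polyTurn (Fin.cons x w : Fin (K + 1) → ℂ) i = ∑ k ∈ range K, pathTurn V (s + k) +
      arg ((V (s + 1) - V s) / (V (s + K + 1) - V (s + K))) := by
  have hvert : ∀ j, 0 < j → j ≤ K →
      (Fin.cons x w : Fin (K + 1) → ℂ) (j : Fin (K + 1)) = V (s + j) :=
    fun j hj₀ hjK => by
      rw [Fin.cons_natCast_of_pos x w hj₀ hjK, hw]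
      exact congrArg V (by simp only; omega)
  refine sum_polyTurn_eq_of_edge_eq_pos_mul _ V s fun j hj => ?_
  rcases Nat.eq_zero_or_pos j with rfl | hj₀
  · simp only [zero_add, add_zero]
    rw [hvert 1 one_pos hK, Nat.cast_zero, Fin.cons_zero]
    simpa only [real_smul] using (exists_pos_smul_sub_of_mem_openSegment hx₀).1
  rcases hj.lt_or_eq with hjK | rfl
  · refine ⟨1, one_pos, ?_⟩
    rw [hvert (j + 1) (by omega) hjK, hvert j hj₀ hjK.le, ofReal_one, one_mul, add_assoc]
  · rw [hvert j hj₀ le_rfl, Fin.natCast_self, Fin.cons_zero]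
    simpa only [real_smul] using (exists_pos_smul_sub_of_mem_openSegment hx₁).2

/-- Splitting an oriented closed polygon `v = (v 0, …, v (n-1))` at a self-crossing
point `c` of the edge from `v (m-1)` to `v m` and the edge from `v (n-1)` to `v 0`
yields the two closed polygons `(c, v m, …, v (n-1))` and `(c, v 0, …, v (m-1))`,
whose turning numbers sum to the turning number of `v`. -/
theorem turningNumber_split {n m : ℕ} [NeZero n] (hm2 : 2 ≤ m) (hmn : m + 2 ≤ n)
    (v : Fin n → ℂ)
    (c : ℂ)
    (hc1 : c ∈ openSegment ℝ (v ⟨m - 1, by omega⟩) (v ⟨m, by omega⟩))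
    (hc2 : c ∈ openSegment ℝ (v ⟨n - 1, by omega⟩) (v ⟨0, by omega⟩))
    (htrans : ∀ r : ℝ,
      v ⟨0, by omega⟩ - v ⟨n - 1, by omega⟩ ≠ r • (v ⟨m, by omega⟩ - v ⟨m - 1, by omega⟩)) :
    turningNumber v =
      turningNumber (Fin.cons c (fun i : Fin (n - m) => v ⟨m + i.val, by omega⟩)) +
      turningNumber (Fin.cons c (fun i : Fin m => v ⟨i.val, by omega⟩)) := by
  set V : ℕ → ℂ := fun k => v k
  have hV : ∀ k (hk : k < n), v ⟨k, hk⟩ = V k := fun k hk =>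
    congrArg v (Fin.natCast_eq_mk hk).symm
  have hVper : ∀ k, V (n + k) = V k := fun k => by simp [V]
  have hVn : V n = V 0 := hVper 0
  simp only [hV] at hc1 hc2 htrans
  have hP := sum_polyTurn_eq_sum_pathTurn v (m - 1)
  have hout := sum_polyTurn_cons_of_mem_openSegment (K := n - m) (by omega) V (m - 1) c
    (fun i : Fin (n - m) => v ⟨m + i.val, by omega⟩) (fun i => by rw [hV]; congr 1; omega)
    (by rwa [Nat.sub_add_cancel (by omega)])
    (by rwa [show m - 1 + (n - m) = n - 1 by omega, Nat.sub_add_cancel (by omega), hVn])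
  have hin := sum_polyTurn_cons_of_mem_openSegment (K := m) (by omega) V (n - 1) c
    (fun i : Fin m => v ⟨i.val, by omega⟩)
    (fun i => by rw [hV, Nat.sub_add_cancel (by omega), hVper])
    (by rwa [Nat.sub_add_cancel (by omega), hVn])
    (by rwa [show n - 1 + m = n + (m - 1) by omega, show n + (m - 1) + 1 = n + m by omega,
      hVper, hVper])
  rw [Nat.sub_add_cancel (by omega), show m - 1 + (n - m) = n - 1 by omega,
    Nat.sub_add_cancel (by omega), hVn] at hout
  rw [Nat.sub_add_cancel (by omega), hVn, show n - 1 + m = n + (m - 1) by omega,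
    show n + (m - 1) + 1 = n + m by omega, hVper, hVper] at hin
  have hsplit := sum_range_add (fun k => pathTurn V (m - 1 + k)) (n - m) m
  rw [Nat.sub_add_cancel (by omega)] at hsplit
  simp only [show ∀ k, m - 1 + (n - m + k) = n - 1 + k by omega] at hsplit
  have hcancel := arg_div_add_arg_div_eq_zero fun r => by rw [← real_smul]; exact htrans r
  simp only [turningNumber]
  rw [← add_div, hP, hout, hin, hsplit]
  congr 1
  linarith
end

section
/- Let A = (α_0,...,α_{n-1}) with α_i ∈ (−π,π), ∑ α_i ≡ 0 (mod 2π), and set β_i = ∑_{j≤i} α_j mod 2π and u_i = (cos β_i, sin β_i). If there exist λ_0,...,λ_{n-1} > 0 with ∑ λ_i u_i = 0, then there exists a closed polygon in R² with n vertices whose turning angle at v_i is α_i for all i, namely the polygon with edge vectors λ_i u_i. -/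
/-!
The vertices are the partial sums of the edge vectors `λ i • u i`; since these sum to zero,
the edge leaving the last vertex closes the polygon. Consecutive edge directions differ by
`β i - β (i - 1)`, which is `α i` up to a multiple of `2π`: a nonzero one only at `i = 0`,
where the partial sums wrap around and `∑ α ∈ 2πℤ` enters. As `α i ∈ (-π, π)`, the principal
argument of the quotient of consecutive edges is then exactly `α i`.
-/

open Real Complex Finset

theorem Fin.sum_Iio_add_one_of_sum_eq_zero {M : Type*} [AddCommMonoid M] {n : ℕ}
    {f : Fin (n + 1) → M} (hf : ∑ j, f j = 0) (i : Fin (n + 1)) :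
    ∑ j ∈ Iio (i + 1), f j = ∑ j ∈ Iio i, f j + f i := by
  rw [add_comm (∑ j ∈ Iio i, f j), ← sum_insert notMem_Iio_self, Iio_insert]
  rcases eq_or_ne i (last n) with rfl | hi
  · rw [Fin.last_add_one, ← bot_eq_zero, Iio_bot, ← Fin.top_eq_last, Iic_top, hf, sum_empty]
  · rw [Fin.Iio_add_one_eq_Iic (by simpa [Fin.val_add_one, hi] using (i + 1).isLt)]

theorem Fin.sum_Iic_eq_sum_Iic_sub_one_add {M : Type*} [AddCommGroup M] {n : ℕ}
    (f : Fin (n + 1) → M) (i : Fin (n + 1)) :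
    ∑ j ∈ Iic i, f j = ∑ j ∈ Iic (i - 1), f j + f i - if i = 0 then ∑ j, f j else 0 := by
  rcases eq_or_ne i 0 with rfl | hi
  · have hzero : Iic (0 : Fin (n + 1)) = {0} := by ext; simp
    have hlast : Iic (0 - 1 : Fin (n + 1)) = univ :=
      eq_univ_of_forall fun j => mem_Iic.2 (Fin.le_def.2 (by rw [zero_sub, Fin.coe_neg_one]; omega))
    rw [if_pos rfl, hzero, hlast, sum_singleton, add_sub_cancel_left]
  · rw [Fin.Iic_sub_one_eq_Iio (Fin.pos_iff_ne_zero.2 hi), ← Iio_insert, sum_insert notMem_Iio_self,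
      if_neg hi, sub_zero, add_comm]

theorem Complex.arg_mul_exp_div_mul_exp {a b : ℝ} (ha : 0 < a) (hb : 0 < b) (φ ψ : ℝ) :
    arg (b * exp (ψ * I) / (a * exp (φ * I))) = toIocMod two_pi_pos (-π) (ψ - φ) := by
  have hquot : (b : ℂ) * exp (ψ * I) / (a * exp (φ * I)) =
      ((b / a : ℝ) : ℂ) * exp (↑(ψ - φ) * I) := by
    have hexp := exp_ne_zero (φ * I)
    have ha' : (a : ℂ) ≠ 0 := ofReal_ne_zero.2 ha.ne'
    rw [ofReal_sub, sub_mul, exp_sub, ofReal_div]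
    field_simp
  rw [hquot, arg_real_mul _ (div_pos hb ha), arg_exp_mul_I]

/-- Given an angle sequence `α ∈ (-π,π)^n` with `∑ α i ≡ 0 (mod 2π)`, partial-sum
directions `u i = (cos β i, sin β i)` with `β i = ∑_{j ≤ i} α j`, and strictly positive
coefficients `λ i` with `∑ λ i • u i = 0`, the closed polygon with vertices
`v k = ∑_{i < k} λ i • u i` (hence edge vectors `λ i • u i`) realizes `α`, i.e. its
turning angle at every vertex `i` equals `α i`. -/
theorem polygon_of_positive_combination {n : ℕ} [NeZero n]
    (α : Fin n → ℝ) (hα : ∀ i : Fin n, α i ∈ Set.Ioo (-π) π)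
    (hsum : ∃ m : ℤ, ∑ i : Fin n, α i = 2 * m * π)
    (β : Fin n → ℝ) (hβ : ∀ i : Fin n, β i = ∑ j ∈ Finset.Iic i, α j)
    (u : Fin n → ℂ) (hu : ∀ i : Fin n, u i = Complex.exp ((β i : ℂ) * Complex.I))
    (l : Fin n → ℝ) (hl : ∀ i : Fin n, 0 < l i)
    (hcl : ∑ i : Fin n, l i • u i = 0)
    (v : Fin n → ℂ) (hv : ∀ k : Fin n, v k = ∑ i ∈ Finset.Iio k, l i • u i) :
    (∀ i : Fin n, v (i + 1) - v i = l i • u i) ∧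
      (∀ i : Fin n, polyTurn v i = α i) := by
  obtain ⟨n, rfl⟩ := Nat.exists_eq_succ_of_ne_zero (NeZero.ne n)
  have hedge (i : Fin (n + 1)) : v (i + 1) - v i = l i • u i := by
    rw [hv, hv, Fin.sum_Iio_add_one_of_sum_eq_zero hcl, add_sub_cancel_left]
  refine ⟨hedge, fun i => ?_⟩
  have hprev : v i - v (i - 1) = l (i - 1) • u (i - 1) := by simpa using hedge (i - 1)
  obtain ⟨m, hm⟩ := hsum
  have hstep : β i - β (i - 1) = α i - (if i = 0 then m else 0 : ℤ) • (2 * π) := by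
    rw [hβ, hβ, Fin.sum_Iic_eq_sum_Iic_sub_one_add α i, hm]
    split_ifs <;> simp only [zsmul_eq_mul, zero_smul] <;> ring
  rw [polyTurn, hedge, hprev, hu, hu, real_smul, real_smul,
    arg_mul_exp_div_mul_exp (hl _) (hl _), hstep, toIocMod_sub_zsmul, toIocMod_eq_self]
  obtain ⟨hlo, hhi⟩ := hα i
  constructor <;> linarith
end

section
/- If a closed polygon P ⊂ R^d (d ≥ 2) has turning angles α_0,...,α_{n-1} ∈ (0,π), then ∑_{i=0}^{n-1} α_i ≥ 2π. -/
/-!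
Let `e i = v (i + 1) - v i` be the edge vectors; the turning angles are the angles between
consecutive edges, and `∑ e i = 0`. Along any chain of vectors `x 0, …, x k`, the sum of the
angles between consecutive vectors is at least the length of the detour `x 0 → ∑ x → x k`
(induction on `k`, using the triangle inequality for angles and the fact that `x + y` splits
the angle between `x` and `y`). For the chain `e 1, …, e (n - 1)` the sum is `-e 0`, so the
closed chain of edges travels from `e 0` to its antipode `-e 0` and back, each trip costing `π`.
-/

open Real InnerProductGeometry

section ChainAngles

variable {V : Type*} [NormedAddCommGroup V] [InnerProductSpace ℝ V]

theorem angle_add_angle_add_le_angle_add_angle (x s y : V) :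
    angle x (s + y) + angle (s + y) y ≤ angle x s + angle s y := by
  rcases eq_or_ne y 0 with rfl | hy
  · simp
  rw [angle_eq_angle_add_add_angle_add s hy, angle_comm y]
  linarith [angle_le_angle_add_angle x s (s + y)]

theorem angle_sum_add_angle_sum_le_sum_angle {k : ℕ} (x : Fin (k + 1) → V) (h0 : x 0 ≠ 0) :
    angle (x 0) (∑ i, x i) + angle (∑ i, x i) (x (Fin.last k)) ≤
      ∑ i : Fin k, angle (x i.castSucc) (x i.succ) := by
  induction k with
  | zero => simp [angle_self h0]
  | succ k ih =>
    have hinit := ih (fun i => x i.castSucc) h0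
    simp only [Fin.castSucc_zero] at hinit
    rw [Fin.sum_univ_castSucc x,
      Fin.sum_univ_castSucc fun i : Fin (k + 1) => angle (x i.castSucc) (x i.succ),
      Fin.succ_last]
    simp only [Fin.succ_castSucc, Nat.succ_eq_add_one]
    linarith [angle_add_angle_add_le_angle_add_angle (x 0) (∑ i : Fin (k + 1), x i.castSucc)
        (x (Fin.last (k + 1))),
      angle_le_angle_add_angle (∑ i : Fin (k + 1), x i.castSucc) (x (Fin.last k).castSucc)
        (x (Fin.last (k + 1)))]

theorem two_pi_le_sum_angle_of_sum_eq_zero {n : ℕ} [NeZero n] (e : Fin n → V)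
    (hsum : ∑ i, e i = 0) (he : ∀ i, e i ≠ 0) :
    2 * π ≤ ∑ i, angle (e i) (e (i + 1)) := by
  rcases n with _ | _ | m
  · exact absurd rfl (NeZero.ne 0)
  · exact absurd (by simpa using hsum) (he 0)
  have htail : ∑ i : Fin (m + 1), e i.succ = -e 0 :=
    eq_neg_of_add_eq_zero_right (by rwa [Fin.sum_univ_succ] at hsum)
  have hchain := angle_sum_add_angle_sum_le_sum_angle (fun i : Fin (m + 1) => e i.succ) (he _)
  simp only [htail, Fin.succ_zero_eq_one, Fin.succ_last, Nat.succ_eq_add_one] at hchain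
  have hsplit : ∑ i, angle (e i) (e (i + 1)) = angle (e 0) (e 1) +
      ∑ i : Fin m, angle (e i.castSucc.succ) (e i.succ.succ) +
      angle (e (Fin.last (m + 1))) (e 0) := by
    rw [Fin.sum_univ_castSucc, Fin.sum_univ_succ]
    simp only [Fin.coeSucc_eq_succ, Fin.succ_castSucc, Fin.last_add_one, Fin.castSucc_zero,
      zero_add, add_assoc]
  calc 2 * π = angle (e 0) (-e 0) + angle (-e 0) (e 0) := by
        rw [angle_self_neg_of_nonzero (he 0), angle_neg_self_of_nonzero (he 0)]; ring
    _ ≤ (angle (e 0) (e 1) + angle (e 1) (-e 0)) +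
        (angle (-e 0) (e (Fin.last (m + 1))) + angle (e (Fin.last (m + 1))) (e 0)) :=
      add_le_add (angle_le_angle_add_angle _ _ _) (angle_le_angle_add_angle _ _ _)
    _ ≤ ∑ i, angle (e i) (e (i + 1)) := by rw [hsplit]; linarith

end ChainAngles

theorem total_curvature_ge_two_pi_general {d n : ℕ} [NeZero n]
    (v : Fin n → EuclideanSpace ℝ (Fin d))
    (hnd : ∀ i : Fin n, v (i + 1) ≠ v i)
    (α : Fin n → ℝ)
    (hreal : ∀ i : Fin n,
      InnerProductGeometry.angle (v i - v (i - 1)) (v (i + 1) - v i) = α i) :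
    2 * π ≤ ∑ i : Fin n, α i := by
  set e : Fin n → EuclideanSpace ℝ (Fin d) := fun i => v (i + 1) - v i
  have hsum : ∑ i, e i = 0 := by
    simp only [e, Finset.sum_sub_distrib]
    exact sub_eq_zero.2 (Fintype.sum_equiv (Equiv.addRight 1) _ _ fun _ => rfl)
  have hturn : ∑ i, α i = ∑ i, angle (e i) (e (i + 1)) :=
    Fintype.sum_equiv (Equiv.subRight 1) _ _ fun i => by simp [e, ← hreal]
  rw [hturn]
  exact two_pi_le_sum_angle_of_sum_eq_zero e hsum fun i => sub_ne_zero.2 (hnd i)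

/-- Polygonal Fenchel theorem: a closed polygon in `ℝ^d`, `d ≥ 2`, with nondegenerate
edges and turning angles `α i ∈ (0, π)` has total curvature `∑ α i ≥ 2π`. -/
theorem total_curvature_ge_two_pi {d n : ℕ} (hd : 2 ≤ d) [NeZero n] (hn : 3 ≤ n)
    (v : Fin n → EuclideanSpace ℝ (Fin d))
    (hnd : ∀ i : Fin n, v (i + 1) ≠ v i)
    (α : Fin n → ℝ) (hα : ∀ i : Fin n, α i ∈ Set.Ioo 0 π)
    (hreal : ∀ i : Fin n,
      InnerProductGeometry.angle (v i - v (i - 1)) (v (i + 1) - v i) = α i) :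
    2 * π ≤ ∑ i : Fin n, α i :=
  total_curvature_ge_two_pi_general v hnd α hreal
end
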